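/- Let t ≥ 1. For each task i ∈ {1, …, t} let μ_i^{(0)}, μ_i^{(1)}, …, μ_i^{(t−i+1)} be probability measures on X, where μ_i^{(0)} is the marginal of the target distribution of task i and μ_i^{(k)} is the marginal of its source distribution after k rounds of generative-replay refinement; for each 0 ≤ k ≤ t−i+1 let f_i^{(k)} : X → Y be the true labeling function of μ_i^{(k)} and let h_i^{(k)} ∈ H minimize the risk R(·, μ_i^{(k)}, f_i^{(k)}) over H. Then for every classifier h ∈ H, the total accumulated error after learning all t tasks satisfies Σ_{i=1}^{t} R(h, μ_i^{(0)}, f_i^{(0)}) ≤ Σ_{i=1}^{t} [ R'(h, h_i^{(t−i+1)}, μ_i^{(t−i+1)}) + Σ_{k=0}^{t−i} ( Ψ(μ_i^{(k)}, μ_i^{(k+1)}) + σ_{i,k} ) ], where σ_{i,k} = R'(h_i^{(k)}, f_i^{(k)}, μ_i^{(k)}) + R'(h_i^{(k)}, h_i^{(k+1)}, μ_i^{(k+1)}). -/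

import Mathlib

/-! The bound holds task by task. The triangle inequality for `τ` gives
`R(h, μ⁽⁰⁾, f⁽⁰⁾) ≤ R'(h, h⁽⁰⁾, μ⁽⁰⁾) + R'(h⁽⁰⁾, f⁽⁰⁾, μ⁽⁰⁾)`, and one refinement round
`R'(h, h⁽ᵏ⁾, μ⁽ᵏ⁾) ≤ Ψ(μ⁽ᵏ⁾, μ⁽ᵏ⁺¹⁾) + R'(h, h⁽ᵏ⁾, μ⁽ᵏ⁺¹⁾)
  ≤ Ψ(μ⁽ᵏ⁾, μ⁽ᵏ⁺¹⁾) + R'(h, h⁽ᵏ⁺¹⁾, μ⁽ᵏ⁺¹⁾) + R'(h⁽ᵏ⁾, h⁽ᵏ⁺¹⁾, μ⁽ᵏ⁺¹⁾)`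
uses the discrepancy (both `h` and `h⁽ᵏ⁾` lie in `H`) and then the triangle inequality and
symmetry of `τ`. Telescoping over the rounds gives the bound; the label terms
`R'(h⁽ᵏ⁾, f⁽ᵏ⁾, μ⁽ᵏ⁾)` with `k ≥ 1` are nonnegative slack. -/

open MeasureTheory Finset

/-- `R'(f, g, μ) = ∫ τ(f(x), g(x)) dμ(x)`. -/
noncomputable def Rp {X Y : Type*} [MeasurableSpace X] (τ : Y → Y → ℝ)
    (f g : X → Y) (μ : Measure X) : ℝ := ∫ x, τ (f x) (g x) ∂μ

/-- Discrepancy distance `Ψ(μ, ν)` w.r.t. loss `τ` and hypothesis class `H`. -/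
noncomputable def disc {X Y : Type*} [MeasurableSpace X] (τ : Y → Y → ℝ)
    (H : Set (X → Y)) (μ ν : Measure X) : ℝ :=
  sSup {r : ℝ | ∃ h ∈ H, ∃ h' ∈ H,
    r = |(∫ x, τ (h' x) (h x) ∂μ) - ∫ x, τ (h' x) (h x) ∂ν|}

section

variable {X Y : Type*} [MeasurableSpace X] {τ : Y → Y → ℝ} {M : ℝ} {H : Set (X → Y)}

lemma Rp_nonneg (hτ : ∀ y y', 0 ≤ τ y y') (p q : X → Y) (μ : Measure X) :
    0 ≤ Rp τ p q μ :=
  integral_nonneg fun _ => hτ _ _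

lemma Rp_comm (hsym : ∀ y y', τ y y' = τ y' y) (p q : X → Y) (μ : Measure X) :
    Rp τ p q μ = Rp τ q p μ := by
  simp only [Rp, hsym]

lemma integrable_loss_of_le (hτ0 : ∀ y y', 0 ≤ τ y y') (hτM : ∀ y y', τ y y' ≤ M)
    {p q : X → Y} (hm : Measurable fun x => τ (p x) (q x)) (μ : Measure X)
    [IsFiniteMeasure μ] : Integrable (fun x => τ (p x) (q x)) μ :=
  .of_bound hm.aestronglyMeasurable M <| .of_forall fun _ =>
    (Real.norm_of_nonneg (hτ0 _ _)).trans_le (hτM _ _)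

lemma Rp_le_add (hτ0 : ∀ y y', 0 ≤ τ y y') (htri : ∀ y y' y'', τ y y'' ≤ τ y y' + τ y' y'')
    {p q r : X → Y} {μ : Measure X} (hpq : Integrable (fun x => τ (p x) (q x)) μ)
    (hqr : Integrable (fun x => τ (q x) (r x)) μ) :
    Rp τ p r μ ≤ Rp τ p q μ + Rp τ q r μ := by
  rw [Rp, Rp, Rp, ← integral_add hpq hqr]
  exact integral_mono_of_nonneg (.of_forall fun _ => hτ0 _ _) (hpq.add hqr)
    (.of_forall fun _ => htri _ _ _)

lemma bddAbove_disc (hτ0 : ∀ y y', 0 ≤ τ y y') (hτM : ∀ y y', τ y y' ≤ M)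
    (μ ν : Measure X) [IsFiniteMeasure μ] [IsFiniteMeasure ν] :
    BddAbove {r : ℝ | ∃ h ∈ H, ∃ h' ∈ H,
      r = |(∫ x, τ (h' x) (h x) ∂μ) - ∫ x, τ (h' x) (h x) ∂ν|} := by
  have hnorm : ∀ (p q : X → Y) (ρ : Measure X) [IsFiniteMeasure ρ],
      |∫ x, τ (p x) (q x) ∂ρ| ≤ M * ρ.real Set.univ := fun p q ρ _ =>
    norm_integral_le_of_norm_le_const <| .of_forall fun _ =>
      (Real.norm_of_nonneg (hτ0 _ _)).trans_le (hτM _ _)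
  refine ⟨M * μ.real Set.univ + M * ν.real Set.univ, ?_⟩
  rintro r ⟨h, -, h', -, rfl⟩
  exact (abs_sub _ _).trans (add_le_add (hnorm h' h μ) (hnorm h' h ν))

lemma Rp_le_Rp_add_disc (hτ0 : ∀ y y', 0 ≤ τ y y') (hτM : ∀ y y', τ y y' ≤ M)
    {p q : X → Y} (hp : p ∈ H) (hq : q ∈ H)
    (μ ν : Measure X) [IsFiniteMeasure μ] [IsFiniteMeasure ν] :
    Rp τ p q μ ≤ Rp τ p q ν + disc τ H μ ν := by
  have hle : |Rp τ p q μ - Rp τ p q ν| ≤ disc τ H μ ν :=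
    le_csSup (bddAbove_disc hτ0 hτM μ ν) ⟨q, hq, p, hp, rfl⟩
  linarith [le_abs_self (Rp τ p q μ - Rp τ p q ν)]

variable (hτ0 : ∀ y y', 0 ≤ τ y y') (hτM : ∀ y y', τ y y' ≤ M)
  (hsym : ∀ y y', τ y y' = τ y' y) (htri : ∀ y y' y'', τ y y'' ≤ τ y y' + τ y' y'')
  (hmeas : ∀ p ∈ H, ∀ q ∈ H, Measurable fun x => τ (p x) (q x))
include hτ0 hτM hsym htri hmeas

lemma Rp_le_Rp_add_disc_add_Rp {p g g' : X → Y} (hp : p ∈ H) (hg : g ∈ H) (hg' : g' ∈ H)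
    (μ ν : Measure X) [IsFiniteMeasure μ] [IsFiniteMeasure ν] :
    Rp τ p g μ ≤ Rp τ p g' ν + (disc τ H μ ν + Rp τ g g' ν) := by
  have hshift := Rp_le_Rp_add_disc hτ0 hτM hp hg μ ν
  have htriangle : Rp τ p g ν ≤ Rp τ p g' ν + Rp τ g' g ν :=
    Rp_le_add hτ0 htri (integrable_loss_of_le hτ0 hτM (hmeas p hp g' hg') ν)
      (integrable_loss_of_le hτ0 hτM (hmeas g' hg' g hg) ν)
  rw [Rp_comm hsym g' g] at htriangle
  linarith

lemma Rp_le_Rp_add_sum_disc {p : X → Y} (hp : p ∈ H) (μ : ℕ → Measure X) (g : ℕ → X → Y)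
    (n : ℕ) (hμ : ∀ k ≤ n, IsFiniteMeasure (μ k)) (hg : ∀ k ≤ n, g k ∈ H) :
    Rp τ p (g 0) (μ 0) ≤ Rp τ p (g n) (μ n) +
      ∑ k ∈ range n, (disc τ H (μ k) (μ (k + 1)) + Rp τ (g k) (g (k + 1)) (μ (k + 1))) := by
  have hstep : ∀ k ∈ range n, Rp τ p (g k) (μ k) - Rp τ p (g (k + 1)) (μ (k + 1)) ≤
      disc τ H (μ k) (μ (k + 1)) + Rp τ (g k) (g (k + 1)) (μ (k + 1)) := by
    intro k hk
    have hk : k + 1 ≤ n := mem_range.1 hk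
    have := hμ k (Nat.le_of_succ_le hk)
    have := hμ (k + 1) hk
    linarith [Rp_le_Rp_add_disc_add_Rp hτ0 hτM hsym htri hmeas hp (hg k (Nat.le_of_succ_le hk))
      (hg (k + 1) hk) (μ k) (μ (k + 1))]
  have := sum_le_sum hstep
  rw [sum_range_sub' (fun k => Rp τ p (g k) (μ k))] at this
  linarith

lemma Rp_le_replay_bound {p : X → Y} (hp : p ∈ H) (μ : ℕ → Measure X) (f g : ℕ → X → Y)
    (n : ℕ) (hμ : ∀ k ≤ n + 1, IsFiniteMeasure (μ k)) (hg : ∀ k ≤ n + 1, g k ∈ H)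
    (hf : Measurable fun x => τ (g 0 x) (f 0 x)) :
    Rp τ p (f 0) (μ 0) ≤ Rp τ p (g (n + 1)) (μ (n + 1)) +
      ∑ k ∈ range (n + 1), (disc τ H (μ k) (μ (k + 1)) +
        (Rp τ (g k) (f k) (μ k) + Rp τ (g k) (g (k + 1)) (μ (k + 1)))) := by
  have := hμ 0 n.succ.zero_le
  have hg0 := hg 0 n.succ.zero_le
  have htarget : Rp τ p (f 0) (μ 0) ≤ Rp τ p (g 0) (μ 0) + Rp τ (g 0) (f 0) (μ 0) :=
    Rp_le_add hτ0 htri (integrable_loss_of_le hτ0 hτM (hmeas p hp _ hg0) _)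
      (integrable_loss_of_le hτ0 hτM hf _)
  have hchain := Rp_le_Rp_add_sum_disc hτ0 hτM hsym htri hmeas hp μ g (n + 1) hμ hg
  have hlabel : Rp τ (g 0) (f 0) (μ 0) ≤ ∑ k ∈ range (n + 1), Rp τ (g k) (f k) (μ k) :=
    single_le_sum (f := fun k => Rp τ (g k) (f k) (μ k)) (fun _ _ => Rp_nonneg hτ0 _ _ _)
      (mem_range.2 n.succ_pos)
  simp only [← add_assoc, sum_add_distrib] at hchain ⊢
  linarith

end

theorem total_accumulated_error_bound_general {X Y : Type*} [MeasurableSpace X]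
    (τ : Y → Y → ℝ) (M' : ℝ)
    (hbd : ∀ y y' : Y, 0 ≤ τ y y' ∧ τ y y' ≤ M')
    (hsym : ∀ y y' : Y, τ y y' = τ y' y)
    (htri : ∀ y y' y'' : Y, τ y y'' ≤ τ y y' + τ y' y'')
    (H : Set (X → Y))
    (t : ℕ)
    (μ : ℕ → ℕ → Measure X)
    (hprob : ∀ i ∈ Finset.Icc 1 t, ∀ k ≤ t - i + 1, IsProbabilityMeasure (μ i k))
    (f : ℕ → ℕ → X → Y) (hc : ℕ → ℕ → X → Y)
    (hcH : ∀ i ∈ Finset.Icc 1 t, ∀ k ≤ t - i + 1, hc i k ∈ H)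
    (hMeas : ∀ p q : X → Y,
      (p ∈ H ∨ ∃ i k, p = f i k) → (q ∈ H ∨ ∃ i k, q = f i k) →
      Measurable fun x => τ (p x) (q x))
    (h : X → Y) (hhH : h ∈ H) :
    ∑ i ∈ Finset.Icc 1 t, Rp τ h (f i 0) (μ i 0) ≤
      ∑ i ∈ Finset.Icc 1 t,
        (Rp τ h (hc i (t - i + 1)) (μ i (t - i + 1)) +
          ∑ k ∈ Finset.range (t - i + 1),
            (disc τ H (μ i k) (μ i (k + 1)) +
              (Rp τ (hc i k) (f i k) (μ i k) +
                Rp τ (hc i k) (hc i (k + 1)) (μ i (k + 1))))) := by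
  refine sum_le_sum fun i hi => ?_
  have hcH0 := hcH i hi 0 (t - i).succ.zero_le
  exact Rp_le_replay_bound (fun y y' => (hbd y y').1) (fun y y' => (hbd y y').2) hsym htri
    (fun p hp q hq => hMeas p q (.inl hp) (.inl hq)) hhH (μ i) (f i) (hc i) (t - i)
    (fun k hk => have := hprob i hi k hk; inferInstance) (hcH i hi)
    (hMeas _ _ (.inl hcH0) (.inr ⟨i, 0, rfl⟩))

/-- Lemma 1: total accumulated-error bound after learning `t` tasks
with a single model trained via generative replay. -/
theorem total_accumulated_error_bound {X Y : Type*} [MeasurableSpace X]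
    (τ : Y → Y → ℝ) (M' : ℝ) (hM : 0 < M')
    (hbd : ∀ y y' : Y, 0 ≤ τ y y' ∧ τ y y' ≤ M')
    (hsym : ∀ y y' : Y, τ y y' = τ y' y)
    (htri : ∀ y y' y'' : Y, τ y y'' ≤ τ y y' + τ y' y'')
    (H : Set (X → Y)) (hH : H.Nonempty)
    (t : ℕ) (ht : 1 ≤ t)
    (μ : ℕ → ℕ → Measure X)
    (hprob : ∀ i ∈ Finset.Icc 1 t, ∀ k ≤ t - i + 1, IsProbabilityMeasure (μ i k))
    (f : ℕ → ℕ → X → Y) (hc : ℕ → ℕ → X → Y)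
    (hcH : ∀ i ∈ Finset.Icc 1 t, ∀ k ≤ t - i + 1, hc i k ∈ H)
    (hcMin : ∀ i ∈ Finset.Icc 1 t, ∀ k ≤ t - i + 1, ∀ h' ∈ H,
      Rp τ (hc i k) (f i k) (μ i k) ≤ Rp τ h' (f i k) (μ i k))
    (hMeas : ∀ p q : X → Y,
      (p ∈ H ∨ ∃ i k, p = f i k) → (q ∈ H ∨ ∃ i k, q = f i k) →
      Measurable fun x => τ (p x) (q x))
    (h : X → Y) (hhH : h ∈ H) :
    ∑ i ∈ Finset.Icc 1 t, Rp τ h (f i 0) (μ i 0) ≤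
      ∑ i ∈ Finset.Icc 1 t,
        (Rp τ h (hc i (t - i + 1)) (μ i (t - i + 1)) +
          ∑ k ∈ Finset.range (t - i + 1),
            (disc τ H (μ i k) (μ i (k + 1)) +
              (Rp τ (hc i k) (f i k) (μ i k) +
                Rp τ (hc i k) (hc i (k + 1)) (μ i (k + 1))))) :=
  total_accumulated_error_bound_general τ M' hbd hsym htri H t μ hprob f hc hcH hMeas h hhH
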